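/- arXiv:1810.00248 — 5 statements merged into one kernel-verified Lean document; each statement's English description precedes it below -/
import Mathlib

section
/- The function x ↦ (1/2)(|x| - π)^2 - π^2/6 on [-π, π] has Fourier cosine expansion 2·∑_{k=1}^∞ k^{-2}·cos(kx); that is, for all x ∈ [-π, π], 2·∑_{k=1}^∞ k^{-2}·cos(kx) = (1/2)(|x| - π)^2 - π^2/6. -/
open Real

/-
The claim is the case `k = 1` of Mathlib's Fourier expansion of the periodized Bernoulli
polynomials, `∑ cos (2π n y) / n² = π² B₂(y)` for `y ∈ [0, 1]`, read at `y = |x| / (2π)`;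
the cosine series is even in `x`, which accounts for the absolute value.
-/

theorem Polynomial.bernoulli_two_map_eval (y : ℝ) :
    ((Polynomial.bernoulli 2).map (algebraMap ℚ ℝ)).eval y = y ^ 2 - y + 1 / 6 := by
  simp [Polynomial.bernoulli, Finset.sum_range_succ, Polynomial.eval_monomial, bernoulli]
  ring

theorem hasSum_cos_nat_mul_div_sq {x : ℝ} (hx : x ∈ Set.Icc 0 (2 * π)) :
    HasSum (fun n : ℕ => Real.cos (n * x) / (n : ℝ) ^ 2) ((x - π) ^ 2 / 4 - π ^ 2 / 12) := by
  have hπ : 0 < 2 * π := by positivity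
  have hy : x / (2 * π) ∈ Set.Icc (0 : ℝ) 1 := by
    rw [Set.mem_Icc, le_div_iff₀ hπ, div_le_iff₀ hπ]
    constructor <;> linarith [hx.1, hx.2]
  convert hasSum_one_div_nat_pow_mul_cos one_ne_zero hy using 1
  · ext n
    rw [show 2 * π * n * (x / (2 * π)) = n * x by field_simp]
    ring
  · rw [mul_one, Polynomial.bernoulli_two_map_eval]
    field_simp
    ring

theorem hasSum_cos_succ_mul_div_sq {x : ℝ} (hx : |x| ≤ 2 * π) :
    HasSum (fun k : ℕ => Real.cos ((k + 1) * x) / ((k : ℝ) + 1) ^ 2)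
      ((|x| - π) ^ 2 / 4 - π ^ 2 / 12) := by
  have h := (hasSum_nat_add_iff' 1).mpr (hasSum_cos_nat_mul_div_sq ⟨abs_nonneg x, hx⟩)
  simp only [Finset.range_one, Finset.sum_singleton, Nat.cast_zero, Nat.cast_add, Nat.cast_one,
    ne_eq, OfNat.ofNat_ne_zero, not_false_eq_true, zero_pow, div_zero, sub_zero] at h
  refine h.congr_fun fun k => ?_
  rcases abs_choice x with hx' | hx' <;> simp [hx', Real.cos_neg]

/-- For all `x ∈ [-π, π]`,
`2 ∑_{k≥1} cos (k x) / k² = (1/2)(|x| - π)² - π²/6`. -/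
theorem stmt1 (x : ℝ) (hx : x ∈ Set.Icc (-π) π) :
    2 * ∑' k : ℕ, Real.cos (((k : ℝ) + 1) * x) / ((k : ℝ) + 1) ^ 2
      = (1 / 2) * (|x| - π) ^ 2 - π ^ 2 / 6 := by
  have hx' : |x| ≤ 2 * π := by
    rw [abs_le]
    constructor <;> linarith [hx.1, hx.2, pi_pos]
  rw [(hasSum_cos_succ_mul_div_sq hx').tsum_eq]
  ring
end

section
/- For all x ∈ [-π, π], 2·∑_{k=1}^∞ k^{-4}·cos(kx) = π^4/45 - (1/24)(x^2 - 2π|x|)^2. -/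
/-!
For `0 ≤ x ≤ 2π` the series is Mathlib's Fourier expansion of the Bernoulli polynomial
`B₄(x / 2π)` (`hasSum_one_div_nat_pow_mul_cos`) with its `n = 0` term dropped, and
`B₄(t) = t²(1 - t)² - 1/30`. On `[-π, π]`, evenness of cosine reduces `x` to `|x|`.
-/

open Real Set

theorem bernoulliFun_four (t : ℝ) : bernoulliFun 4 t = t ^ 4 - 2 * t ^ 3 + t ^ 2 - 1 / 30 := by
  simp only [bernoulliFun, Polynomial.bernoulli_def, Finset.sum_range_succ, Finset.sum_range_zero,
    Polynomial.map_add, Polynomial.map_monomial, Polynomial.map_zero, Polynomial.eval_add,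
    Polynomial.eval_monomial, Polynomial.eval_zero]
  norm_num [bernoulli, bernoulli'_two, bernoulli'_three, bernoulli'_four, Nat.choose]
  ring

theorem hasSum_cos_mul_div_pow_four {x : ℝ} (hx : x ∈ Icc 0 (2 * π)) :
    HasSum (fun n : ℕ => cos (((n : ℝ) + 1) * x) / ((n : ℝ) + 1) ^ 4)
      (π ^ 4 / 90 - (x ^ 2 - 2 * π * x) ^ 2 / 48) := by
  have hπ : (0 : ℝ) < 2 * π := by positivity
  have ht : x / (2 * π) ∈ Icc (0 : ℝ) 1 :=
    ⟨div_nonneg hx.1 hπ.le, (div_le_one hπ).2 hx.2⟩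
  have h := (hasSum_nat_add_iff' 1).2 (hasSum_one_div_nat_pow_mul_cos two_ne_zero ht)
  convert h.congr_fun fun n ↦ ?_ using 1
  -- `hasSum_nat_add_iff'` produces the sum for the monoid instance derived from `AddCommGroup ℝ`
  · rfl
  · have hB : (Polynomial.map (algebraMap ℚ ℝ) (Polynomial.bernoulli 4)).eval (x / (2 * π))
        = _ := bernoulliFun_four _
    rw [show 2 * 2 = 4 from rfl, hB, Finset.sum_range_one, Nat.cast_zero, zero_pow four_ne_zero,
      div_zero, zero_mul, sub_zero, Nat.factorial]
    field_simp
    ring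
  · push_cast
    field_simp

/-- For all `x ∈ [-π, π]`,
`2 ∑_{k≥1} cos (k x) / k⁴ = π⁴/45 - (1/24)(x² - 2π|x|)²`. -/
theorem stmt2 (x : ℝ) (hx : x ∈ Set.Icc (-π) π) :
    2 * ∑' k : ℕ, Real.cos (((k : ℝ) + 1) * x) / ((k : ℝ) + 1) ^ 4
      = π ^ 4 / 45 - (1 / 24) * (x ^ 2 - 2 * π * |x|) ^ 2 := by
  have habs : |x| ∈ Icc 0 (2 * π) :=
    ⟨abs_nonneg x, (abs_le.2 hx).trans (by linarith [pi_pos])⟩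
  have hcos (n : ℕ) : cos (((n : ℝ) + 1) * |x|) = cos (((n : ℝ) + 1) * x) := by
    rcases abs_choice x with h | h <;> simp [h]
  simp_rw [← hcos]
  rw [(hasSum_cos_mul_div_pow_four habs).tsum_eq, ← sq_abs x]
  ring
end

section
/- If f : [0, ∞) → ℝ is completely monotone (continuous on [0,∞), smooth on (0,∞), and (-1)^n f^{(n)}(x) ≥ 0 for all x > 0 and all n ∈ ℕ), then for every a ≥ 0 the sequence (f(a·n))_{n∈ℕ} is completely monotonic, i.e., (-1)^n Δ^n (f(a·k)) ≥ 0 for all n, k ∈ ℕ. -/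
/-- Forward difference operator on real sequences: `(Δ f) k = f (k + 1) - f k`. -/
def fwdDelta (f : ℕ → ℝ) : ℕ → ℝ := fun k => f (k + 1) - f k

open Set

private lemma iterWithin_eq {f : ℝ → ℝ} {s : Set ℝ} (hs : IsOpen s) {x : ℝ} (hx : x ∈ s)
    (n : ℕ) : iteratedDerivWithin n f s x = iteratedDeriv n f x := by
  simp only [iteratedDerivWithin, iteratedDeriv, iteratedFDerivWithin_of_isOpen n hs hx]

private lemma fwdDelta_neg (h : ℕ → ℝ) (n : ℕ) (k : ℕ) :
    fwdDelta^[n] (fun m => -(h m)) k = -(fwdDelta^[n] h k) := by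
  induction n generalizing h k with
  | zero => simp
  | succ n ih =>
    rw [Function.iterate_succ_apply, Function.iterate_succ_apply]
    have : fwdDelta (fun m => -(h m)) = fun m => -(fwdDelta h m) := by
      funext m; simp [fwdDelta]; ring
    rw [this, ih]

/-- On the open set `Ioi 0`, `iteratedDeriv m f` is differentiable with deriv the next one. -/
private lemma diffAt_iter {f : ℝ → ℝ} (hsmooth : ContDiffOn ℝ (⊤ : ℕ∞) f (Set.Ioi 0)) (m : ℕ)
    {x : ℝ} (hx : x ∈ Set.Ioi (0:ℝ)) : DifferentiableAt ℝ (iteratedDeriv m f) x := by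
  have h1 : DifferentiableWithinAt ℝ (iteratedDerivWithin m f (Set.Ioi 0)) (Set.Ioi 0) x :=
    hsmooth.differentiableOn_iteratedDerivWithin (by exact_mod_cast lt_top_iff_ne_top.2 (by simp))
      (isOpen_Ioi.uniqueDiffOn) x hx
  have h2 : DifferentiableAt ℝ (iteratedDerivWithin m f (Set.Ioi 0)) x :=
    h1.differentiableAt (isOpen_Ioi.mem_nhds hx)
  refine h2.congr_of_eventuallyEq ?_
  filter_upwards [isOpen_Ioi.mem_nhds hx] with y hy
  exact (iterWithin_eq isOpen_Ioi hy m).symm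

private lemma anti_iter {f : ℝ → ℝ} (hsmooth : ContDiffOn ℝ (⊤ : ℕ∞) f (Set.Ioi 0))
    (hmono : ∀ n : ℕ, ∀ x : ℝ, 0 < x → 0 ≤ (-1 : ℝ) ^ n * iteratedDeriv n f x) (m : ℕ) :
    AntitoneOn (fun x => (-1 : ℝ) ^ m * iteratedDeriv m f x) (Set.Ioi 0) := by
  apply antitoneOn_of_deriv_nonpos (convex_Ioi 0)
  · exact fun x hx => ((diffAt_iter hsmooth m hx).const_mul _).continuousAt.continuousWithinAt
  · rw [interior_Ioi]
    exact fun x hx => ((diffAt_iter hsmooth m hx).const_mul _).differentiableWithinAt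
  · rw [interior_Ioi]
    intro x hx
    have hd : deriv (fun x => (-1 : ℝ) ^ m * iteratedDeriv m f x) x
        = (-1 : ℝ) ^ m * deriv (iteratedDeriv m f) x :=
      deriv_const_mul _ (diffAt_iter hsmooth m hx)
    rw [hd, ← iteratedDeriv_succ]
    have := hmono (m + 1) x hx
    rw [pow_succ] at this
    nlinarith [this]

/-- Main induction, generalized over `f`. -/
private lemma key : ∀ n : ℕ, ∀ f : ℝ → ℝ,
    ContinuousOn f (Set.Ici 0) → ContDiffOn ℝ (⊤ : ℕ∞) f (Set.Ioi 0) →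
    (∀ m : ℕ, ∀ x : ℝ, 0 < x → 0 ≤ (-1 : ℝ) ^ m * iteratedDeriv m f x) →
    ∀ a : ℝ, 0 ≤ a → ∀ k : ℕ,
    0 ≤ (-1 : ℝ) ^ n * (fwdDelta^[n] (fun m : ℕ => f (a * m)) k) := by
  intro n
  induction n with
  | zero =>
    intro f hcont hsmooth hmono a ha k
    simp only [Function.iterate_zero, id, pow_zero, one_mul]
    -- f is nonneg on Ici 0
    have hpos : ∀ x : ℝ, 0 ≤ x → 0 ≤ f x := by
      intro x hx
      rcases hx.lt_or_eq with h | h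
      · simpa using hmono 0 x h
      · subst h
        have htend : Filter.Tendsto f (nhdsWithin 0 (Set.Ioi 0)) (nhds (f 0)) :=
          (hcont 0 (by simp)).mono_of_mem_nhdsWithin (nhdsWithin_mono 0 Ioi_subset_Ici_self
            (self_mem_nhdsWithin))
        refine ge_of_tendsto htend ?_
        filter_upwards [self_mem_nhdsWithin] with y hy
        simpa using hmono 0 y hy
    exact hpos _ (by positivity)
  | succ n ih =>
    intro f hcont hsmooth hmono a ha k
    set g : ℝ → ℝ := fun x => f x - f (x + a) with hg
    have hmaps : Set.MapsTo (fun x : ℝ => x + a) (Set.Ioi 0) (Set.Ioi 0) := by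
      intro x hx; simp only [Set.mem_Ioi] at *; linarith
    have hshift : ContDiffOn ℝ (⊤ : ℕ∞) (fun x => f (x + a)) (Set.Ioi 0) :=
      hsmooth.comp (ContDiff.contDiffOn (by fun_prop)) hmaps
    have hgsmooth : ContDiffOn ℝ (⊤ : ℕ∞) g (Set.Ioi 0) := hsmooth.sub hshift
    have hgcont : ContinuousOn g (Set.Ici 0) := by
      apply hcont.sub
      apply hcont.comp (by fun_prop)
      intro x hx; simp only [Set.mem_Ici] at *; linarith
    have hgmono : ∀ m : ℕ, ∀ x : ℝ, 0 < x → 0 ≤ (-1 : ℝ) ^ m * iteratedDeriv m g x := by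
      intro m x hx
      have hxa : x + a ∈ Set.Ioi (0:ℝ) := by simp only [Set.mem_Ioi]; linarith
      have hsub : iteratedDeriv m g x = iteratedDeriv m f x - iteratedDeriv m f (x + a) := by
        have e1 : iteratedDeriv m g x = iteratedDerivWithin m g (Set.Ioi 0) x :=
          (iterWithin_eq isOpen_Ioi hx m).symm
        have e2 : iteratedDerivWithin m g (Set.Ioi 0) x
            = iteratedDerivWithin m f (Set.Ioi 0) x
              - iteratedDerivWithin m (fun z => f (z + a)) (Set.Ioi 0) x := by
          have := iteratedDerivWithin_sub (f := f) (g := fun z => f (z + a)) (n := m)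
            hx isOpen_Ioi.uniqueDiffOn ((hsmooth x hx).of_le (by exact_mod_cast le_top)) ((hshift x hx).of_le (by exact_mod_cast le_top))
          exact this
        have e3 : iteratedDerivWithin m (fun z => f (z + a)) (Set.Ioi 0) x
            = iteratedDeriv m (fun z => f (z + a)) x := iterWithin_eq isOpen_Ioi hx m
        have e4 : iteratedDeriv m (fun z => f (z + a)) x = iteratedDeriv m f (x + a) := by
          rw [iteratedDeriv_comp_add_const]
        rw [e1, e2, e3, e4, iterWithin_eq isOpen_Ioi hx m]
      rw [hsub, mul_sub, sub_nonneg]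
      exact anti_iter hsmooth hmono m hx hxa (by linarith)
    -- now unfold one step of the iterate
    rw [Function.iterate_succ_apply]
    have hstep : fwdDelta (fun m : ℕ => f (a * m)) = fun m : ℕ => -(g (a * m)) := by
      funext m
      simp only [fwdDelta, hg]
      have : a * ((m : ℝ) + 1) = a * m + a := by ring
      push_cast
      rw [this]
      ring
    rw [hstep, fwdDelta_neg]
    have := ih g hgcont hgsmooth hgmono a ha k
    rw [pow_succ]
    nlinarith [this]

/-- If `f : [0,∞) → ℝ` is completely monotone (continuous on `[0,∞)`,
smooth on `(0,∞)`, with `(-1)^n f⁽ⁿ⁾(x) ≥ 0` for all `x > 0` and `n`), then for every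
`a ≥ 0` the sequence `(f (a n))_{n∈ℕ}` is completely monotonic. -/
theorem stmt4 (f : ℝ → ℝ)
    (hcont : ContinuousOn f (Set.Ici 0))
    (hsmooth : ContDiffOn ℝ (⊤ : ℕ∞) f (Set.Ioi 0))
    (hmono : ∀ n : ℕ, ∀ x : ℝ, 0 < x → 0 ≤ (-1 : ℝ) ^ n * iteratedDeriv n f x)
    (a : ℝ) (ha : 0 ≤ a) (n k : ℕ) :
    0 ≤ (-1 : ℝ) ^ n * (fwdDelta^[n] (fun m : ℕ => f (a * m)) k) :=
  key n f hcont hsmooth hmono a ha k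
end

section
/- Suppose φ : ℝ → ℝ is a continuous, 2π-periodic function with zero mean satisfying, for some μ > 0 and a > 0 and for all x, y ∈ ℝ: (1/2)(φ(x) - φ(y))^2 ≤ |(K*φ)(x) - (K*φ)(y)|, where K*φ is a-Hölder continuous with Hölder constant C. Then φ is (a/2)-Hölder continuous with |φ(x) - φ(y)| ≤ √(2C)·|x - y|^{a/2} for all x, y. -/
open Real

theorem abs_le_sqrt_mul_rpow_half {u K t a : ℝ} (ht : 0 ≤ t) (h : u ^ 2 ≤ K * t ^ a) :
    |u| ≤ √K * t ^ (a / 2) :=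
  calc |u| = √(u ^ 2) := (sqrt_sq_eq_abs u).symm
    _ ≤ √(K * t ^ a) := sqrt_le_sqrt h
    _ = √K * √(t ^ a) := sqrt_mul' K (rpow_nonneg ht a)
    _ = √K * t ^ (a / 2) := by rw [sqrt_eq_rpow (t ^ a), ← rpow_mul ht, mul_one_div]

theorem stmt9_general (φ g : ℝ → ℝ) (a C : ℝ)
    (hgHolder : ∀ x y : ℝ, |g x - g y| ≤ C * |x - y| ^ a)
    (hkey : ∀ x y : ℝ, (1 / 2) * (φ x - φ y) ^ 2 ≤ |g x - g y|) :
    ∀ x y : ℝ, |φ x - φ y| ≤ Real.sqrt (2 * C) * |x - y| ^ (a / 2) := by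
  intro x y
  refine abs_le_sqrt_mul_rpow_half (abs_nonneg _) ?_
  linarith [(hkey x y).trans (hgHolder x y)]

/-- If `φ` is continuous, `2π`-periodic with zero mean and satisfies
`(1/2)(φ x - φ y)² ≤ |g x - g y|` where `g = K*φ` is `a`-Hölder with constant `C`,
then `φ` is `(a/2)`-Hölder with constant `√(2C)`. -/
theorem stmt9 (φ g : ℝ → ℝ) (μ a C : ℝ) (hμ : 0 < μ) (ha : 0 < a)
    (hφcont : Continuous φ) (hφper : Function.Periodic φ (2 * π))
    (hφmean : (∫ x in (-π)..π, φ x) = 0)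
    (hgHolder : ∀ x y : ℝ, |g x - g y| ≤ C * |x - y| ^ a)
    (hkey : ∀ x y : ℝ, (1 / 2) * (φ x - φ y) ^ 2 ≤ |g x - g y|) :
    ∀ x y : ℝ, |φ x - φ y| ≤ Real.sqrt (2 * C) * |x - y| ^ (a / 2) :=
  stmt9_general φ g a C hgHolder hkey
end

section
/- Let μ > 0, let K be a continuous, even, 2π-periodic kernel with continuous derivative on (0,π), and let φ be an even, 2π-periodic C¹ function with zero mean, nondecreasing on (-π, 0), satisfying (μ - φ(x))·φ'(x) = (K * φ')(x) for all x, where K' < 0 and φ' ≥ 0 on (0, π) and φ is nontrivial. Then φ'(x) > 0 for all x ∈ (-π, 0). -/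
open Real Set

/-! The derivative `f = φ'` is odd, so folding the convolution onto `(-π, 0)` gives
`(K * f)(x) = ∫_{-π}^0 (K(x - y) - K(x + y)) f(y) dy`. For `x, y ∈ (-π, 0)` the point `x - y`
is strictly closer to `0` than `x + y` modulo `2π`, so the kernel difference is positive, while
`f ≥ 0` there by monotonicity of `φ` and `f ≠ 0` there because `φ` is nonconstant. Hence
`(μ - φ(x)) f(x) > 0`, which together with `f(x) ≥ 0` forces `f(x) > 0`. -/

lemma intervalIntegral.integral_eq_integral_add_comp_neg {E : Type*} [NormedAddCommGroup E]
    [NormedSpace ℝ E] {g : ℝ → E} (hg : Continuous g) (a : ℝ) :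
    ∫ y in -a..a, g y = ∫ y in -a..0, (g y + g (-y)) := by
  have hfold : ∫ y in (0 : ℝ)..a, g y = ∫ y in -a..0, g (-y) := by simp
  rw [← intervalIntegral.integral_add_adjacent_intervals (b := 0)
      (hg.intervalIntegrable _ _) (hg.intervalIntegrable _ _), hfold]
  exact (intervalIntegral.integral_add (hg.intervalIntegrable _ _)
    ((hg.comp continuous_neg).intervalIntegrable _ _)).symm

lemma MonotoneOn.deriv_nonneg_of_mem_Ioo {φ : ℝ → ℝ} {a b x : ℝ} (hφ : MonotoneOn φ (Icc a b))
    (hx : x ∈ Ioo a b) : 0 ≤ deriv φ x := by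
  rw [← derivWithin_of_mem_nhds (Icc_mem_nhds hx.1 hx.2)]
  exact hφ.derivWithin_nonneg

lemma MonotoneOn.exists_deriv_pos {φ : ℝ → ℝ} {a b : ℝ} (hφd : Differentiable ℝ φ)
    (hφ : MonotoneOn φ (Icc a b)) (hne : ∃ u ∈ Icc a b, φ u ≠ φ b) :
    ∃ y ∈ Ioo a b, 0 < deriv φ y := by
  by_contra! hnonpos
  obtain ⟨u, hu, hφu⟩ := hne
  have hanti : AntitoneOn φ (Icc a b) :=
    antitoneOn_of_deriv_nonpos (convex_Icc a b) hφd.continuous.continuousOn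
      hφd.differentiableOn (by simpa only [interior_Icc] using hnonpos)
  have hb : b ∈ Icc a b := ⟨hu.1.trans hu.2, le_rfl⟩
  exact hφu (le_antisymm (hφ hu hb hu.2) (hanti hu hb hu.2))

lemma exists_mem_Icc_apply_ne_apply_zero {φ : ℝ → ℝ}
    (hper : Function.Periodic φ (2 * π)) (heven : ∀ x, φ (-x) = φ x)
    (hmean : ∫ x in (-π)..π, φ x = 0) (hnontriv : ∃ x, φ x ≠ 0) :
    ∃ u ∈ Icc (-π) 0, φ u ≠ φ 0 := by
  by_contra! hconst
  have hconst' : ∀ u ∈ Icc (-π) π, φ u = φ 0 := fun u hu => by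
    rcases le_total u 0 with hu₀ | hu₀
    · exact hconst u ⟨hu.1, hu₀⟩
    · rw [← heven]
      exact hconst (-u) ⟨by linarith [hu.2], by linarith⟩
  have hzero : φ 0 = 0 := by
    have : ∫ x in (-π)..π, φ x = (2 * π) * φ 0 := by
      rw [intervalIntegral.integral_congr (g := fun _ => φ 0)
        (fun u hu => hconst' u (by simpa [uIcc_of_le (by linarith [pi_pos] : -π ≤ π)] using hu)),
        intervalIntegral.integral_const, smul_eq_mul]
      ring
    nlinarith [pi_pos]
  obtain ⟨w, hw⟩ := hnontriv
  obtain ⟨y, hy, hwy⟩ := hper.exists_mem_Ico (by positivity) w (-π)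
  exact hw (hwy ▸ (hconst' y ⟨hy.1, by linarith [hy.2]⟩).trans hzero)

section Kernel

variable {K : ℝ → ℝ}

lemma StrictAntiOn.apply_lt_of_abs_lt_of_even (heven : ∀ x, K (-x) = K x) {b : ℝ}
    (hK : StrictAntiOn K (Icc 0 b)) {s t : ℝ} (hst : |s| < t) (htb : t ≤ b) : K t < K s := by
  have hKs : K |s| = K s := by
    rcases abs_choice s with h | h <;> rw [h]
    exact heven s
  exact hKs ▸ hK ⟨abs_nonneg s, hst.le.trans htb⟩ ⟨(abs_nonneg s).trans hst.le, htb⟩ hst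

lemma kernel_add_lt_kernel_sub (hper : Function.Periodic K (2 * π)) (heven : ∀ x, K (-x) = K x)
    (hK : StrictAntiOn K (Icc 0 π)) {x y : ℝ} (hx : x ∈ Ioo (-π) 0) (hy : y ∈ Ioo (-π) 0) :
    K (x + y) < K (x - y) := by
  obtain ⟨hx₁, hx₂⟩ := hx
  obtain ⟨hy₁, hy₂⟩ := hy
  rcases le_or_gt (x + y) (-π) with h | h
  · rw [← hper (x + y)]
    exact hK.apply_lt_of_abs_lt_of_even heven (abs_lt.2 ⟨by linarith, by linarith⟩) (by linarith)
  · rw [← heven (x + y)]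
    exact hK.apply_lt_of_abs_lt_of_even heven (abs_lt.2 ⟨by linarith, by linarith⟩) (by linarith)

lemma integral_kernel_mul_odd_pos (hKc : Continuous K) (hper : Function.Periodic K (2 * π))
    (heven : ∀ x, K (-x) = K x) (hK : StrictAntiOn K (Icc 0 π)) {f : ℝ → ℝ}
    (hfc : Continuous f) (hodd : ∀ y, f (-y) = -f y) (hnonneg : ∀ y ∈ Ioo (-π) 0, 0 ≤ f y)
    {y₀ : ℝ} (hy₀ : y₀ ∈ Ioo (-π) 0) (hfy₀ : 0 < f y₀) {x : ℝ} (hx : x ∈ Ioo (-π) 0) :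
    0 < ∫ y in (-π)..π, K (x - y) * f y := by
  have hfold : ∫ y in (-π)..π, K (x - y) * f y =
      ∫ y in (-π)..0, (K (x - y) - K (x + y)) * f y := by
    rw [intervalIntegral.integral_eq_integral_add_comp_neg (by fun_prop)]
    congr 1 with y
    rw [hodd, sub_neg_eq_add]
    ring
  have hle : ∀ y ∈ Ioc (-π) 0, 0 ≤ (K (x - y) - K (x + y)) * f y := fun y hy => by
    rcases hy.2.lt_or_eq with hy₂ | rfl
    · exact mul_nonneg (sub_pos.2 (kernel_add_lt_kernel_sub hper heven hK hx ⟨hy.1, hy₂⟩)).le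
        (hnonneg y ⟨hy.1, hy₂⟩)
    · simp [Function.Odd.map_zero hodd]
  have hlt : 0 < (K (x - y₀) - K (x + y₀)) * f y₀ :=
    mul_pos (sub_pos.2 (kernel_add_lt_kernel_sub hper heven hK hx hy₀)) hfy₀
  simpa [hfold] using intervalIntegral.integral_lt_integral_of_continuousOn_of_le_of_exists_lt
    (by linarith [pi_pos]) continuousOn_const
    (by fun_prop : Continuous fun y => (K (x - y) - K (x + y)) * f y).continuousOn hle
    ⟨y₀, Ioo_subset_Icc_self hy₀, hlt⟩

end Kernel

theorem stmt14_general (μ : ℝ) (K φ : ℝ → ℝ)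
    (hKcont : Continuous K) (hKper : Function.Periodic K (2 * π))
    (hKeven : ∀ x, K (-x) = K x)
    (hKdec : ∀ x ∈ Set.Ioo (0 : ℝ) π, deriv K x < 0)
    (hφC1 : ContDiff ℝ 1 φ) (hφper : Function.Periodic φ (2 * π))
    (hφeven : ∀ x, φ (-x) = φ x)
    (hφmean : (∫ x in (-π)..π, φ x) = 0)
    (hφmono : MonotoneOn φ (Set.Icc (-π) 0))
    (hφnontriv : ∃ x, φ x ≠ 0)
    (heq : ∀ x : ℝ, (μ - φ x) * deriv φ x = ∫ y in (-π)..π, K (x - y) * deriv φ y) :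
    ∀ x ∈ Set.Ioo (-π) (0 : ℝ), 0 < deriv φ x := by
  intro x hx
  have hφd : Differentiable ℝ φ := hφC1.differentiable one_ne_zero
  have hodd : ∀ y, deriv φ (-y) = -deriv φ y := fun y => by
    simpa only [funext hφeven, neg_neg] using deriv_comp_neg (f := φ) (x := -y)
  have hKanti : StrictAntiOn K (Icc 0 π) :=
    strictAntiOn_of_deriv_neg (convex_Icc 0 π) hKcont.continuousOn
      (by simpa only [interior_Icc] using hKdec)
  obtain ⟨y₀, hy₀, hfy₀⟩ := hφmono.exists_deriv_pos hφd
    (exists_mem_Icc_apply_ne_apply_zero hφper hφeven hφmean hφnontriv)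
  have hnonneg : ∀ y ∈ Ioo (-π) 0, 0 ≤ deriv φ y := fun y hy => hφmono.deriv_nonneg_of_mem_Ioo hy
  have hconv := integral_kernel_mul_odd_pos hKcont hKper hKeven hKanti
    (hφC1.continuous_deriv le_rfl) hodd hnonneg hy₀ hfy₀ hx
  rw [← heq x] at hconv
  exact (hnonneg x hx).lt_of_ne fun h => by simp [← h] at hconv

/-- Let `μ > 0`, `K` a continuous, even, `2π`-periodic kernel,
differentiable with `K' < 0` on `(0,π)`, and `φ` a nontrivial even `2π`-periodic `C¹`
function with zero mean, nondecreasing on `(-π,0)`, satisfying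
`(μ - φ) φ' = K * φ'`. Then `φ' > 0` on `(-π, 0)`. -/
theorem stmt14 (μ : ℝ) (hμ : 0 < μ) (K φ : ℝ → ℝ)
    (hKcont : Continuous K) (hKper : Function.Periodic K (2 * π))
    (hKeven : ∀ x, K (-x) = K x)
    (hKdiff : ∀ x ∈ Set.Ioo (0 : ℝ) π, DifferentiableAt ℝ K x)
    (hKdec : ∀ x ∈ Set.Ioo (0 : ℝ) π, deriv K x < 0)
    (hφC1 : ContDiff ℝ 1 φ) (hφper : Function.Periodic φ (2 * π))
    (hφeven : ∀ x, φ (-x) = φ x)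
    (hφmean : (∫ x in (-π)..π, φ x) = 0)
    (hφmono : MonotoneOn φ (Set.Icc (-π) 0))
    (hφnontriv : ∃ x, φ x ≠ 0)
    (heq : ∀ x : ℝ, (μ - φ x) * deriv φ x = ∫ y in (-π)..π, K (x - y) * deriv φ y) :
    ∀ x ∈ Set.Ioo (-π) (0 : ℝ), 0 < deriv φ x :=
  stmt14_general μ K φ hKcont hKper hKeven hKdec hφC1 hφper hφeven hφmean hφmono hφnontriv heq
end
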